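/- arXiv:0909.4111 — 3 statements merged into one kernel-verified Lean document; each statement's English description precedes it below -/
import Mathlib

section
/- For any nonempty bounded open set A ⊆ ℝ², one has i(A) − |A|²/(2π) − |M(A)|²/|A| ≥ 0, where |A| is the Lebesgue measure of A, M(A) = ∫_A x dx, and i(A) = ∫_A |x|² dx. -/
open MeasureTheory Metric

/-- The plane `ℝ²`. -/
abbrev Plane := EuclideanSpace ℝ (Fin 2)

/-- The mass `|A|` of a set: its two-dimensional Lebesgue measure. -/
noncomputable def mass (A : Set Plane) : ℝ := (volume A).toReal

/-- The momentum `M(A) = ∫_A x dx`. -/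
noncomputable def mom (A : Set Plane) : Plane := ∫ x in A, x

/-- The angular momentum `i(A) = ∫_A |x|² dx`. -/
noncomputable def angMom (A : Set Plane) : ℝ := ∫ x in A, ‖x‖ ^ 2

/-- `Q(A; B_r(x₀)) = ∫_{A △ B_r(x₀)} | |x − x₀|² − r² | dx`. -/
noncomputable def Qfun (A : Set Plane) (x₀ : Plane) (r : ℝ) : ℝ :=
  ∫ x in symmDiff A (ball x₀ r), |‖x - x₀‖ ^ 2 - r ^ 2|

open RealInnerProductSpace

/-! Moving the origin to the centroid `c = M(A)/|A|` turns `i(A) − |M(A)|²/|A|` into the second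
moment `∫_A |x − c|² dx` (parallel axis theorem). Among sets of the same mass this moment is
smallest for the ball `B_r(c)` with `πr² = |A|`, because `|x − c|²` is at most `r²` on the ball and
at least `r²` off it (bathtub principle); and the ball's moment is `πr⁴/2 = |A|²/(2π)`. -/

theorem Continuous.integrableOn_of_isBounded {X E : Type*} [PseudoMetricSpace X] [ProperSpace X]
    [MeasurableSpace X] [OpensMeasurableSpace X] {μ : Measure X} [IsFiniteMeasureOnCompacts μ]
    [NormedAddCommGroup E] {f : X → E} (hf : Continuous f) {s : Set X}
    (hs : Bornology.IsBounded s) : IntegrableOn f s μ :=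
  (hf.locallyIntegrable.integrableOn_isCompact hs.isCompact_closure).mono_set subset_closure

theorem setIntegral_le_setIntegral_of_measure_eq {X : Type*} [MeasurableSpace X]
    {μ : Measure X} {g : X → ℝ} {s t : Set X} {c : ℝ} (hs : MeasurableSet s)
    (ht : MeasurableSet t) (hμ : μ s = μ t) (hfin : μ s ≠ ⊤) (hgs : IntegrableOn g s μ)
    (hgt : IntegrableOn g t μ) (h_le : ∀ x ∈ t \ s, g x ≤ c) (h_ge : ∀ x ∈ s \ t, c ≤ g x) :
    ∫ x in t, g x ∂μ ≤ ∫ x in s, g x ∂μ := by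
  have hfin_t : μ t ≠ ⊤ := hμ ▸ hfin
  have h_diff : μ.real (t \ s) = μ.real (s \ t) := by
    simp only [measureReal_def, measure_sdiff_symm ht.nullMeasurableSet hs.nullMeasurableSet
      hμ.symm (measure_ne_top_of_subset Set.inter_subset_left hfin_t)]
  have h_out : ∫ x in t \ s, g x ∂μ ≤ c * μ.real (t \ s) := by
    rw [mul_comm, ← smul_eq_mul, ← setIntegral_const]
    exact setIntegral_mono_on (hgt.mono_set Set.sdiff_subset)
      (integrableOn_const (measure_ne_top_of_subset Set.sdiff_subset hfin_t)) (ht.diff hs) h_le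
  have h_in : c * μ.real (s \ t) ≤ ∫ x in s \ t, g x ∂μ :=
    setIntegral_ge_of_const_le_real (hs.diff ht) (measure_ne_top_of_subset Set.sdiff_subset hfin)
      h_ge (hgs.mono_set Set.sdiff_subset)
  rw [← integral_inter_add_sdiff hs hgt, ← integral_inter_add_sdiff ht hgs, Set.inter_comm]
  rw [h_diff] at h_out
  linarith

theorem integral_norm_sub_centroid_sq {E : Type*} [NormedAddCommGroup E]
    [InnerProductSpace ℝ E] [CompleteSpace E] [MeasurableSpace E] {μ : Measure E}
    [IsFiniteMeasure μ] (h_id : Integrable (fun x ↦ x) μ) (h_sq : Integrable (‖·‖ ^ 2) μ) :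
    ∫ x, ‖x - (μ.real Set.univ)⁻¹ • ∫ y, y ∂μ‖ ^ 2 ∂μ
      = ∫ x, ‖x‖ ^ 2 ∂μ - ‖∫ x, x ∂μ‖ ^ 2 / μ.real Set.univ := by
  set m := μ.real Set.univ with hm_def
  set M := ∫ y, y ∂μ
  have h_inner : Integrable (fun x ↦ 2 * ⟪m⁻¹ • M, x⟫) μ :=
    (h_id.const_inner (m⁻¹ • M)).const_mul 2
  have h_diff : Integrable (fun x ↦ ‖x‖ ^ 2 - 2 * ⟪m⁻¹ • M, x⟫) μ := h_sq.sub h_inner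
  simp_rw [norm_sub_sq_real, real_inner_comm (m⁻¹ • M)]
  rw [integral_add h_diff (integrable_const _), integral_sub h_sq h_inner,
    integral_const_mul, integral_inner h_id, integral_const, smul_eq_mul,
    real_inner_smul_left, real_inner_self_eq_norm_sq, norm_smul, mul_pow, norm_inv,
    Real.norm_of_nonneg measureReal_nonneg, ← hm_def]
  rcases eq_or_ne m 0 with hm | hm
  · simp [hm]
  · field_simp
    ring

theorem setIntegral_ball_norm_sub_sq {E : Type*} [NormedAddCommGroup E] [NormedSpace ℝ E]
    [FiniteDimensional ℝ E] [Nontrivial E] [MeasurableSpace E] [BorelSpace E] (μ : Measure E)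
    [μ.IsAddHaarMeasure] (c : E) {r : ℝ} (hr : 0 ≤ r) :
    ∫ x in ball c r, ‖x - c‖ ^ 2 ∂μ = Module.finrank ℝ E / (Module.finrank ℝ E + 2)
      * μ.real (ball 0 1) * r ^ (Module.finrank ℝ E + 2) := by
  set n := Module.finrank ℝ E
  have h_translate : ∫ x in ball c r, ‖x - c‖ ^ 2 ∂μ = ∫ x in ball 0 r, ‖x‖ ^ 2 ∂μ := by
    have h_pre : (· - c) ⁻¹' ball (0 : E) r = ball c r := by
      ext x; simp [dist_eq_norm]
    rw [← h_pre, (measurePreserving_sub_right μ c).setIntegral_preimage_emb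
      (measurableEmbedding_subRight c) (‖·‖ ^ 2)]
  have h_radial : (fun x : E ↦ (Set.Iio r).indicator (· ^ 2) ‖x‖)
      = (ball (0 : E) r).indicator (‖·‖ ^ 2) := by
    ext x; simp [Set.indicator]
  have h_polar := integral_fun_norm_addHaar μ ((Set.Iio r).indicator (· ^ 2))
  rw [h_radial, integral_indicator measurableSet_ball] at h_polar
  rw [h_translate, h_polar]
  have hn : 0 < n := Module.finrank_pos
  have h_radial_integral : ∫ y in Set.Ioi (0 : ℝ), y ^ (n - 1) • (Set.Iio r).indicator (· ^ 2) y
      = r ^ (n + 2) / (n + 2) := by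
    have h_integrand : ∀ y : ℝ, y ^ (n - 1) • (Set.Iio r).indicator (· ^ 2) y
        = (Set.Iio r).indicator (· ^ (n + 1)) y := by
      intro y
      by_cases hy : y < r
      · rw [Set.indicator_of_mem (Set.mem_Iio.mpr hy), Set.indicator_of_mem (Set.mem_Iio.mpr hy),
          smul_eq_mul, ← pow_add]
        congr 1
        omega
      · simp [Set.indicator, hy]
    simp_rw [h_integrand]
    rw [setIntegral_indicator measurableSet_Iio, Set.Ioi_inter_Iio,
      ← integral_Ioc_eq_integral_Ioo, ← intervalIntegral.integral_of_le hr, integral_pow]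
    push_cast
    ring
  rw [h_radial_integral, nsmul_eq_mul, smul_eq_mul]
  ring

theorem stmt0_general (A : Set Plane) (hA : IsOpen A) (hAb : Bornology.IsBounded A) :
    angMom A - (mass A) ^ 2 / (2 * Real.pi) - ‖mom A‖ ^ 2 / mass A ≥ 0 := by
  have hAfin : volume A ≠ ⊤ := hAb.measure_lt_top.ne
  have : IsFiniteMeasure (volume.restrict A) := isFiniteMeasure_restrict.mpr hAfin
  have h_mass : (volume.restrict A).real Set.univ = mass A := measureReal_restrict_apply_univ _
  set c := (mass A)⁻¹ • mom A
  set r := √(mass A / Real.pi)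
  have hr2 : r ^ 2 = mass A / Real.pi := Real.sq_sqrt (by unfold mass; positivity)
  have h_centroid : ∫ x in A, ‖x - c‖ ^ 2 = angMom A - ‖mom A‖ ^ 2 / mass A := by
    have := integral_norm_sub_centroid_sq (μ := volume.restrict A)
      (continuous_id.integrableOn_of_isBounded hAb)
      ((continuous_norm.pow 2).integrableOn_of_isBounded hAb)
    rwa [h_mass] at this
  have h_ball : ∫ x in ball c r, ‖x - c‖ ^ 2 = mass A ^ 2 / (2 * Real.pi) := by
    rw [setIntegral_ball_norm_sub_sq volume c (Real.sqrt_nonneg _), finrank_euclideanSpace_fin,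
      measureReal_def, EuclideanSpace.volume_ball_fin_two, ENNReal.ofReal_one, one_pow, one_mul,
      ENNReal.toReal_ofReal Real.pi_pos.le, show r ^ (2 + 2) = (r ^ 2) ^ 2 by ring, hr2]
    field_simp
    norm_num
  have h_vol : volume A = volume (ball c r) := by
    rw [EuclideanSpace.volume_ball_fin_two, ← ENNReal.ofReal_pow (Real.sqrt_nonneg _),
      ← ENNReal.ofReal_mul (by positivity), hr2, div_mul_cancel₀ _ Real.pi_pos.ne', mass,
      ENNReal.ofReal_toReal hAfin]
  have h_ball_le := setIntegral_le_setIntegral_of_measure_eq (g := fun x ↦ ‖x - c‖ ^ 2)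
    (c := r ^ 2) hA.measurableSet measurableSet_ball h_vol hAfin
    (((continuous_id.sub continuous_const).norm.pow 2).integrableOn_of_isBounded hAb)
    (((continuous_id.sub continuous_const).norm.pow 2).integrableOn_of_isBounded isBounded_ball)
    (fun x hx ↦ pow_le_pow_left₀ (norm_nonneg _) (mem_ball_iff_norm.mp hx.1).le 2)
    (fun x hx ↦ pow_le_pow_left₀ (Real.sqrt_nonneg _) (by simpa [dist_eq_norm] using hx.2) 2)
  linarith

/-- For any nonempty bounded open set `A ⊆ ℝ²`,
`i(A) − |A|²/(2π) − |M(A)|²/|A| ≥ 0`. -/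
theorem stmt0 (A : Set Plane) (hA : IsOpen A) (hAb : Bornology.IsBounded A)
    (hAne : A.Nonempty) :
    angMom A - (mass A) ^ 2 / (2 * Real.pi) - ‖mom A‖ ^ 2 / mass A ≥ 0 :=
  stmt0_general A hA hAb
end

section
/- Let A ⊆ ℝ² be a nonempty bounded open set. Then i(A) − |A|²/(2π) − |M(A)|²/|A| = 0 if and only if A coincides, up to a set of Lebesgue measure zero, with an open ball B_r(x₀) = {x ∈ ℝ² : |x − x₀| < r} for some x₀ ∈ ℝ² and r > 0. -/
open MeasureTheory Metric

/-!
Write `b = M(A)/|A|` for the barycentre of `A` and `ρ = √(|A|/π)` for the radius of a ball with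
the mass of `A`. Since `|x - c|² - ρ²` is nonnegative outside `B_ρ(c)` and nonpositive inside,
`Q(A; B_ρ(c)) = ∫_A (|x - c|² - ρ²) - ∫_{B_ρ(c)} (|x - c|² - ρ²)`, and expanding the square gives
`Q(A; B_ρ(c)) = i(A) - |A|²/(2π) - |M(A)|²/|A| + |A| |c - b|²`.
Now `Q ≥ 0`, with equality exactly when `A` is a.e. the ball, because its integrand vanishes only
on the null sphere `|x - c| = ρ`. Taking `c = b` shows that the deficit is nonnegative and that it
vanishes only for balls. Conversely, if `A` is a.e. `B_r(x₀)` then `r = ρ` and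
`Q(A; B_r(x₀)) = 0`, so the deficit is at most `0`.
-/

open Set Real RealInnerProductSpace Bornology

theorem Bornology.IsBounded.integrableOn_of_continuous {X E : Type*} [MetricSpace X]
    [ProperSpace X] [MeasurableSpace X] [OpensMeasurableSpace X] [NormedAddCommGroup E]
    {μ : Measure X} [IsFiniteMeasureOnCompacts μ] {f : X → E} {s : Set X} (hs : IsBounded s)
    (hf : Continuous f) : IntegrableOn f s μ :=
  (hf.continuousOn.integrableOn_compact hs.isCompact_closure).mono_set subset_closure

theorem mass_ball (c : Plane) {r : ℝ} (hr : 0 ≤ r) : mass (ball c r) = π * r ^ 2 := by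
  simp [mass, ENNReal.toReal_mul, hr, pi_nonneg, mul_comm]

theorem integral_ball_zero_sq_norm {r : ℝ} (hr : 0 ≤ r) :
    ∫ x in ball (0 : Plane) r, ‖x‖ ^ 2 = π * r ^ 4 / 2 := by
  have hind : (ball (0 : Plane) r).indicator (fun x => ‖x‖ ^ 2)
      = fun x => (Iio r).indicator (· ^ 2) ‖x‖ := by
    ext x; simp [indicator, mem_ball]
  rw [← integral_indicator measurableSet_ball, hind, integral_fun_norm_addHaar,
    finrank_euclideanSpace_fin, measureReal_def, EuclideanSpace.volume_ball_fin_two]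
  have hintegrand : ∀ y ∈ Ioi (0 : ℝ), y ^ (2 - 1) • (Iio r).indicator (· ^ 2) y
      = (Iio r).indicator (· ^ 3) y := by
    intro y _
    by_cases hy : y < r <;> simp [hy]; ring
  rw [setIntegral_congr_fun measurableSet_Ioi hintegrand, setIntegral_indicator measurableSet_Iio,
    Ioi_inter_Iio, ← integral_Ioc_eq_integral_Ioo, ← intervalIntegral.integral_of_le hr,
    integral_pow]
  simp [pi_nonneg]
  ring

theorem integral_ball_sq_norm_sub_sub_sq (c : Plane) {ρ : ℝ} (hρ : 0 ≤ ρ) :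
    ∫ x in ball c ρ, (‖x - c‖ ^ 2 - ρ ^ 2) = -(π * ρ ^ 4 / 2) := by
  have hind : (ball c ρ).indicator (fun x => ‖x - c‖ ^ 2 - ρ ^ 2)
      = fun x => (ball 0 ρ).indicator (fun y : Plane => ‖y‖ ^ 2 - ρ ^ 2) (x - c) := by
    ext x; simp [indicator, dist_eq_norm]
  rw [← integral_indicator measurableSet_ball, hind, integral_sub_right_eq_self,
    integral_indicator measurableSet_ball,
    integral_sub (isBounded_ball.integrableOn_of_continuous
        (by fun_prop : Continuous fun x : Plane => ‖x‖ ^ 2))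
      (integrableOn_const measure_ball_lt_top.ne),
    integral_ball_zero_sq_norm hρ, setIntegral_const, measureReal_def, ← mass, mass_ball 0 hρ]
  simp only [smul_eq_mul]
  ring

theorem setIntegral_sq_norm_sub_sub_sq {A : Set Plane} (hA : IsBounded A) (c : Plane) (ρ : ℝ) :
    ∫ x in A, (‖x - c‖ ^ 2 - ρ ^ 2)
      = angMom A - 2 * ⟪c, mom A⟫ + (‖c‖ ^ 2 - ρ ^ 2) * mass A := by
  have hexpand : ∀ x : Plane, ‖x - c‖ ^ 2 - ρ ^ 2
      = (‖x‖ ^ 2 - 2 * ⟪c, x⟫) + (‖c‖ ^ 2 - ρ ^ 2) := by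
    intro x
    rw [norm_sub_sq_real, real_inner_comm]
    ring
  simp only [hexpand]
  have hint {E : Type} [NormedAddCommGroup E] {f : Plane → E} (hf : Continuous f) :
      IntegrableOn f A :=
    hA.integrableOn_of_continuous hf
  rw [integral_add (hint (by fun_prop)) (hint (by fun_prop)),
    integral_sub (hint (by fun_prop)) (hint (by fun_prop)), integral_const_mul,
    integral_inner (hint (f := fun x : Plane => x) continuous_id), setIntegral_const,
    measureReal_def]
  simp only [angMom, mom, mass, smul_eq_mul]
  ring

theorem Qfun_eq_setIntegral_sub_setIntegral {A : Set Plane} (hAm : MeasurableSet A)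
    (hAb : IsBounded A) (c : Plane) {ρ : ℝ} (hρ : 0 ≤ ρ) :
    Qfun A c ρ = (∫ x in A, (‖x - c‖ ^ 2 - ρ ^ 2)) - ∫ x in ball c ρ, (‖x - c‖ ^ 2 - ρ ^ 2) := by
  have hout : ∫ x in A \ ball c ρ, |‖x - c‖ ^ 2 - ρ ^ 2|
      = ∫ x in A \ ball c ρ, (‖x - c‖ ^ 2 - ρ ^ 2) := by
    refine setIntegral_congr_fun (hAm.diff measurableSet_ball) fun x hx => abs_of_nonneg ?_
    have : ρ ≤ ‖x - c‖ := by simpa [dist_eq_norm] using hx.2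
    nlinarith
  have hin : ∫ x in ball c ρ \ A, |‖x - c‖ ^ 2 - ρ ^ 2|
      = -∫ x in ball c ρ \ A, (‖x - c‖ ^ 2 - ρ ^ 2) := by
    rw [← integral_neg]
    refine setIntegral_congr_fun (measurableSet_ball.diff hAm) fun x hx => abs_of_nonpos ?_
    have : ‖x - c‖ < ρ := by simpa [dist_eq_norm] using hx.1
    nlinarith [norm_nonneg (x - c)]
  rw [Qfun, Set.symmDiff_def, setIntegral_union disjoint_sdiff_sdiff
      (measurableSet_ball.diff hAm)
      ((hAb.subset sdiff_subset).integrableOn_of_continuous (by fun_prop))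
      ((isBounded_ball.subset sdiff_subset).integrableOn_of_continuous (by fun_prop)),
    hout, hin,
    ← integral_inter_add_sdiff measurableSet_ball (hAb.integrableOn_of_continuous (by fun_prop)),
    ← integral_inter_add_sdiff hAm (isBounded_ball.integrableOn_of_continuous (by fun_prop)),
    inter_comm]
  ring

noncomputable def deficit (A : Set Plane) : ℝ :=
  angMom A - mass A ^ 2 / (2 * π) - ‖mom A‖ ^ 2 / mass A

theorem Qfun_eq_deficit_add {A : Set Plane} (hAm : MeasurableSet A) (hAb : IsBounded A)
    (hm : 0 < mass A) (c : Plane) :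
    Qfun A c √(mass A / π) = deficit A + mass A * ‖c - (mass A)⁻¹ • mom A‖ ^ 2 := by
  have hρ : 0 ≤ √(mass A / π) := Real.sqrt_nonneg _
  have hρ2 : √(mass A / π) ^ 2 = mass A / π := Real.sq_sqrt (by positivity)
  rw [Qfun_eq_setIntegral_sub_setIntegral hAm hAb c hρ, setIntegral_sq_norm_sub_sub_sq hAb,
    integral_ball_sq_norm_sub_sub_sq c hρ, norm_sub_sq_real, inner_smul_right, norm_smul,
    Real.norm_of_nonneg (inv_nonneg.2 hm.le), deficit, show (4 : ℕ) = 2 * 2 from rfl, pow_mul,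
    hρ2]
  field_simp
  ring

theorem Qfun_nonneg (A : Set Plane) (c : Plane) (ρ : ℝ) : 0 ≤ Qfun A c ρ :=
  integral_nonneg fun _ => abs_nonneg _

theorem Qfun_eq_zero_iff {A : Set Plane} (hAb : IsBounded A) (c : Plane) {ρ : ℝ} (hρ : 0 < ρ) :
    Qfun A c ρ = 0 ↔ A =ᵐ[volume] ball c ρ := by
  rw [← measure_symmDiff_eq_zero_iff, ← Measure.restrict_eq_zero, Qfun]
  constructor
  · intro hQ
    have hvanish : ∀ᵐ x ∂volume.restrict (symmDiff A (ball c ρ)), |‖x - c‖ ^ 2 - ρ ^ 2| = 0 :=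
      (integral_eq_zero_iff_of_nonneg (fun _ => abs_nonneg _)
        (((hAb.union isBounded_ball).subset symmDiff_subset_union).integrableOn_of_continuous
          (by fun_prop))).1 hQ
    have hsphere : ∀ᵐ x ∂volume.restrict (symmDiff A (ball c ρ)), x ∉ sphere c ρ :=
      ae_restrict_of_ae (measure_eq_zero_iff_ae_notMem.1 (Measure.addHaar_sphere volume c ρ))
    rw [← ae_eq_bot, ← Filter.eventually_false_iff_eq_bot]
    filter_upwards [hvanish, hsphere] with x hx hxs
    rw [abs_eq_zero, sub_eq_zero, sq_eq_sq₀ (norm_nonneg _) hρ.le] at hx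
    exact hxs (mem_sphere_iff_norm.2 hx)
  · intro h
    rw [h, integral_zero_measure]

theorem deficit_nonneg {A : Set Plane} (hAm : MeasurableSet A) (hAb : IsBounded A)
    (hm : 0 < mass A) : 0 ≤ deficit A := by
  simpa [Qfun_eq_deficit_add hAm hAb hm] using
    Qfun_nonneg A ((mass A)⁻¹ • mom A) √(mass A / π)

/-- For a nonempty bounded open set `A ⊆ ℝ²`, equality
`i(A) − |A|²/(2π) − |M(A)|²/|A| = 0` holds iff `A` coincides, up to a set of
Lebesgue measure zero, with an open ball `B_r(x₀)` for some `x₀` and `r > 0`. -/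
theorem stmt1 (A : Set Plane) (hA : IsOpen A) (hAb : Bornology.IsBounded A)
    (hAne : A.Nonempty) :
    angMom A - (mass A) ^ 2 / (2 * Real.pi) - ‖mom A‖ ^ 2 / mass A = 0 ↔
      ∃ (x₀ : Plane) (r : ℝ), 0 < r ∧ A =ᵐ[volume] ball x₀ r := by
  have hm : 0 < mass A :=
    ENNReal.toReal_pos (hA.measure_ne_zero volume hAne) hAb.measure_lt_top.ne
  have hQ := Qfun_eq_deficit_add hA.measurableSet hAb hm
  change deficit A = 0 ↔ _
  constructor
  · intro hdeficit
    have hρ : 0 < √(mass A / π) := Real.sqrt_pos.2 (by positivity)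
    refine ⟨(mass A)⁻¹ • mom A, _, hρ, (Qfun_eq_zero_iff hAb _ hρ).1 ?_⟩
    simp [hQ, hdeficit]
  · rintro ⟨x₀, r, hr, hAr⟩
    have hradius : √(mass A / π) = r := by
      rw [mass, measure_congr hAr, ← mass, mass_ball x₀ hr.le,
        mul_div_cancel_left₀ _ pi_ne_zero, Real.sqrt_sq hr.le]
    have hball := (Qfun_eq_zero_iff hAb x₀ hr).2 hAr
    rw [← hradius, hQ] at hball
    linarith [deficit_nonneg hA.measurableSet hAb hm,
      mul_nonneg hm.le (sq_nonneg ‖x₀ - (mass A)⁻¹ • mom A‖)]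
end

section
/- Let r > 0, B = B_r(0), and let A ⊆ ℝ² be any bounded open set. Then ‖I_A − I_B‖_{L¹}² ≤ 4π Q(A; B); that is, |A △ B|² ≤ 4π ∫_{A △ B} | |x|² − r² | dx. -/
open MeasureTheory Metric

/-!
By Cavalieri's principle `∫_S f = ∫_0^∞ |S ∩ {f > t}| dt`. For `f x = | |x|² - r² |` the sublevel
set `{f ≤ t}` is an annulus of area at most `2πt`, so `|S ∩ {f > t}| ≥ |S| - 2πt`; integrating this
over `0 < t < |S| / (2π)` gives `∫_S f ≥ |S|² / (4π)`.
-/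

open Real Set

lemma volume_ball_sqrt (b : ℝ) : volume (ball (0 : Plane) √b) = ENNReal.ofReal (π * b) := by
  rw [EuclideanSpace.volume_ball_fin_two, ← ENNReal.ofReal_pow (sqrt_nonneg b),
    ← ENNReal.ofReal_mul (by positivity), sq_sqrt', mul_comm]
  rcases le_total 0 b with hb | hb
  · rw [max_eq_left hb]
  · rw [max_eq_right hb, mul_zero, ENNReal.ofReal_zero,
      ENNReal.ofReal_of_nonpos (mul_nonpos_of_nonneg_of_nonpos pi_pos.le hb)]

lemma volume_closedBall_sqrt (b : ℝ) :
    volume (closedBall (0 : Plane) √b) = ENNReal.ofReal (π * b) := by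
  rw [Measure.addHaar_closedBall_eq_addHaar_ball, volume_ball_sqrt]

lemma volume_setOf_abs_norm_sq_sub_le (c : ℝ) {t : ℝ} (ht : 0 ≤ t) :
    volume {x : Plane | |‖x‖ ^ 2 - c| ≤ t} ≤ ENNReal.ofReal (2 * π * t) := by
  have hsub : {x : Plane | |‖x‖ ^ 2 - c| ≤ t} ⊆ closedBall 0 √(c + t) \ ball 0 √(c - t) := by
    intro x (hx : |‖x‖ ^ 2 - c| ≤ t)
    rw [abs_le] at hx
    rw [mem_sdiff, mem_closedBall_zero_iff, mem_ball_zero_iff, lt_sqrt (norm_nonneg x), not_lt]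
    exact ⟨le_sqrt_of_sq_le (by linarith), by linarith⟩
  have hball : ball (0 : Plane) √(c - t) ⊆ closedBall 0 √(c + t) :=
    ball_subset_closedBall.trans (closedBall_subset_closedBall (sqrt_le_sqrt (by linarith)))
  calc volume {x : Plane | |‖x‖ ^ 2 - c| ≤ t}
      ≤ volume (closedBall (0 : Plane) √(c + t)) - volume (ball (0 : Plane) √(c - t)) :=
        (measure_mono hsub).trans_eq
          (measure_sdiff hball measurableSet_ball.nullMeasurableSet measure_ball_lt_top.ne)
    _ = ENNReal.ofReal (π * (c + t)) - ENNReal.ofReal (π * (c - t)) := by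
        rw [volume_closedBall_sqrt, volume_ball_sqrt]
    _ ≤ ENNReal.ofReal (2 * π * t) := by
        rw [tsub_le_iff_right, show π * (c + t) = 2 * π * t + π * (c - t) by ring]
        exact ENNReal.ofReal_add_le

lemma integral_zero_div_sub_mul {m k : ℝ} (hk : k ≠ 0) :
    ∫ t in (0 : ℝ)..m / k, (m - k * t) = m ^ 2 / (2 * k) := by
  rw [intervalIntegral.integral_sub intervalIntegrable_const
    (intervalIntegral.intervalIntegrable_id.const_mul k), intervalIntegral.integral_const,
    intervalIntegral.integral_const_mul, integral_id, smul_eq_mul]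
  field_simp
  ring

section

variable {α : Type*} [MeasurableSpace α] {μ : Measure α} {f : α → ℝ} {k : ℝ}

lemma ofReal_sub_mul_le_measure_inter_lt (hk : 0 ≤ k)
    (hlevel : ∀ t > 0, μ {x | f x ≤ t} ≤ ENNReal.ofReal (k * t)) (S : Set α) {t : ℝ} (ht : 0 < t) :
    ENNReal.ofReal ((μ S).toReal - k * t) ≤ μ ({x | t < f x} ∩ S) := by
  have hcover : μ S ≤ μ ({x | t < f x} ∩ S) + μ {x | f x ≤ t} := by
    refine (measure_mono fun x hx => ?_).trans (measure_union_le _ _)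
    rcases lt_or_ge t (f x) with h | h
    · exact Or.inl ⟨h, hx⟩
    · exact Or.inr h
  rw [ENNReal.ofReal_sub _ (by positivity), tsub_le_iff_right]
  exact ENNReal.ofReal_toReal_le.trans (hcover.trans (add_le_add_right (hlevel t ht) _))

lemma ofReal_sq_div_le_setLIntegral (hk : 0 < k) (hf : Measurable f) (hf0 : 0 ≤ f)
    (hlevel : ∀ t > 0, μ {x | f x ≤ t} ≤ ENNReal.ofReal (k * t)) (S : Set α) :
    ENNReal.ofReal ((μ S).toReal ^ 2 / (2 * k)) ≤ ∫⁻ x in S, ENNReal.ofReal (f x) ∂μ := by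
  set m := (μ S).toReal
  have hm : 0 ≤ m := ENNReal.toReal_nonneg
  have hpos : ∀ t ∈ Ioc 0 (m / k), 0 ≤ m - k * t := fun t ht => by
    have := (le_div_iff₀' hk).1 ht.2
    linarith
  have hint : IntegrableOn (fun t => m - k * t) (Ioc 0 (m / k)) :=
    (continuous_const.sub (continuous_const.mul continuous_id)).integrableOn_Ioc
  calc ENNReal.ofReal (m ^ 2 / (2 * k))
      = ∫⁻ t in Ioc 0 (m / k), ENNReal.ofReal (m - k * t) := by
        rw [← integral_zero_div_sub_mul hk.ne', intervalIntegral.integral_of_le (by positivity),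
          ofReal_integral_eq_lintegral_ofReal hint
            ((ae_restrict_iff' measurableSet_Ioc).2 (ae_of_all _ hpos))]
    _ ≤ ∫⁻ t in Ioi 0, ENNReal.ofReal (m - k * t) := lintegral_mono_set Ioc_subset_Ioi_self
    _ ≤ ∫⁻ t in Ioi 0, μ.restrict S {x | t < f x} :=
        setLIntegral_mono' measurableSet_Ioi fun t ht =>
          (ofReal_sub_mul_le_measure_inter_lt hk.le hlevel S ht).trans
            (Measure.le_restrict_apply _ _)
    _ = ∫⁻ x in S, ENNReal.ofReal (f x) ∂μ :=
        (lintegral_eq_lintegral_meas_lt _ (ae_of_all _ hf0) hf.aemeasurable).symm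

lemma sq_toReal_measure_le_setIntegral (hk : 0 < k) (hf : Measurable f) (hf0 : 0 ≤ f)
    (hlevel : ∀ t > 0, μ {x | f x ≤ t} ≤ ENNReal.ofReal (k * t)) {S : Set α}
    (hfS : IntegrableOn f S μ) :
    (μ S).toReal ^ 2 ≤ 2 * k * ∫ x in S, f x ∂μ := by
  have h := ofReal_sq_div_le_setLIntegral hk hf hf0 hlevel S
  rw [← ofReal_integral_eq_lintegral_ofReal hfS (ae_of_all _ hf0),
    ENNReal.ofReal_le_ofReal_iff (integral_nonneg hf0), div_le_iff₀ (by positivity)] at h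
  linarith

end

theorem stmt9_general (r : ℝ) (A : Set Plane)
    (hAb : Bornology.IsBounded A) :
    (mass (symmDiff A (ball (0 : Plane) r))) ^ 2 ≤ 4 * Real.pi * Qfun A 0 r := by
  have hf : Continuous fun x : Plane => |‖x‖ ^ 2 - r ^ 2| := by fun_prop
  obtain ⟨R, hR⟩ := (hAb.union isBounded_ball).subset_closedBall (0 : Plane)
  have hint : IntegrableOn (fun x : Plane => |‖x‖ ^ 2 - r ^ 2|) (symmDiff A (ball 0 r)) :=
    (hf.continuousOn.integrableOn_compact (isCompact_closedBall 0 R)).mono_set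
      (symmDiff_subset_union.trans hR)
  have key := sq_toReal_measure_le_setIntegral (by positivity : 0 < 2 * π) hf.measurable
    (fun x => abs_nonneg _) (fun t ht => volume_setOf_abs_norm_sq_sub_le _ ht.le) hint
  rw [mass, Qfun]
  simpa only [sub_zero, ← mul_assoc, show (2 : ℝ) * 2 = 4 by norm_num] using key

/-- For `r > 0`, `B = B_r(0)`, and any bounded open set `A ⊆ ℝ²`:
`‖I_A − I_B‖_{L¹}² ≤ 4π Q(A; B)`, i.e. `|A △ B|² ≤ 4π ∫_{A △ B} ||x|² − r²| dx`. -/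
theorem stmt9 (r : ℝ) (hr : 0 < r) (A : Set Plane) (hA : IsOpen A)
    (hAb : Bornology.IsBounded A) :
    (mass (symmDiff A (ball (0 : Plane) r))) ^ 2 ≤ 4 * Real.pi * Qfun A 0 r :=
  stmt9_general r A hAb
end
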